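/- arXiv:q-alg/9707014 — 3 statements merged into one kernel-verified Lean document; each statement's English description precedes it below -/
import Mathlib

section
/- In the B_n^{(1)} perfect crystal of level l, the extremal elements b^{(j)}_a for even j, defined by b_0 = (l,0,...,0) and b_a = f_{i_a}^{max} b_{a-1} (applying f_{i_a} exactly φ_{i_a}(b_{a-1}) times), satisfy: b_a = (0,...,0,l,0,...,0) with l in position x_{a+1} for 1 ≤ a ≤ n-1, b_{n+a-1} = (0,...,0,l,0,...,0) with l in position \bar{x}_{n-a+1} for 1 ≤ a ≤ n-1, and b_{2n-1} = (0,...,0,l) (l in position \bar{x}_1). Moreover ε_{i_{a+1}}(b_a) = 0 and φ_{i_{a+1}}(b_a) > 0 for all 1 ≤ a ≤ 2n-2. -/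
/- The perfect crystal B of level l for B_n^{(1)}:
   elements (x_1,…,x_n,x_0,x̄_n,…,x̄_1) with x_0 ∈ {0,1}, x_i, x̄_i ≥ 0,
   Σ (x_i + x̄_i) = l.  We encode an element as a triple of ℕ-indexed
   integer functions (supported on 1..n) together with x_0. -/
structure BElt where
  x : ℕ → ℤ
  x0 : ℤ
  xb : ℕ → ℤ

namespace BElt

def sumB (n : ℕ) (b : BElt) : ℤ := ∑ i ∈ Finset.Icc 1 n, (b.x i + b.xb i)

/-- membership in the level `l` perfect crystal `B` for `B_n^{(1)}` -/
def mem (n l : ℕ) (b : BElt) : Prop :=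
  (b.x0 = 0 ∨ b.x0 = 1) ∧ (∀ i, 0 ≤ b.x i) ∧ (∀ i, 0 ≤ b.xb i) ∧
  (∀ i, i = 0 ∨ n < i → b.x i = 0 ∧ b.xb i = 0) ∧
  sumB n b = l

/-- the Kashiwara operator `f_0` -/
def f0 (b : BElt) : BElt :=
  if b.xb 2 ≤ b.x 2 then
    ⟨Function.update b.x 2 (b.x 2 + 1), b.x0, Function.update b.xb 1 (b.xb 1 - 1)⟩
  else
    ⟨Function.update b.x 1 (b.x 1 + 1), b.x0, Function.update b.xb 2 (b.xb 2 - 1)⟩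

/-- the Kashiwara operator `f_i`, `1 ≤ i ≤ n-1` -/
def fmid (i : ℕ) (b : BElt) : BElt :=
  if b.xb (i+1) ≤ b.x (i+1) then
    ⟨Function.update (Function.update b.x i (b.x i - 1)) (i+1) (b.x (i+1) + 1), b.x0, b.xb⟩
  else
    ⟨b.x, b.x0, Function.update (Function.update b.xb (i+1) (b.xb (i+1) - 1)) i (b.xb i + 1)⟩

/-- the Kashiwara operator `f_n` -/
def flast (n : ℕ) (b : BElt) : BElt :=
  if b.x0 = 0 then ⟨Function.update b.x n (b.x n - 1), 1, b.xb⟩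
  else ⟨b.x, 0, Function.update b.xb n (b.xb n + 1)⟩

/-- the Kashiwara operator `f_i`, `0 ≤ i ≤ n` -/
def f (n i : ℕ) (b : BElt) : BElt :=
  if i = 0 then f0 b else if i = n then flast n b else fmid i b

/-- `φ_i(b)`; `f_i b` is defined exactly when `φ_i(b) > 0` -/
def phi (n i : ℕ) (b : BElt) : ℤ :=
  if i = 0 then b.xb 1 + max (b.xb 2 - b.x 2) 0
  else if i = n then 2 * b.x n + b.x0
  else b.x i + max (b.xb (i+1) - b.x (i+1)) 0

/-- `ε_i(b)` for the `B_n^{(1)}` perfect crystal -/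
def eps (n i : ℕ) (b : BElt) : ℤ :=
  if i = 0 then b.x 1 + max (b.x 2 - b.xb 2) 0
  else if i = n then 2 * b.xb n + b.x0
  else b.xb i + max (b.x (i+1) - b.xb (i+1)) 0

end BElt

namespace BElt

/-- the index sequence `i_1 = i_{2n-1} = 1`, `i_a = i_{2n-a} = a` for `2 ≤ a ≤ n`
(even `j`); equivalently `i_a = a` for `a ≤ n`, `i_a = 2n - a` for `a > n`. -/
def idx (n a : ℕ) : ℕ := if a ≤ n then a else 2 * n - a

/-- the ground-state element `(l,0,…,0)` (even `j`) -/
def bbar (l : ℕ) : BElt := ⟨fun i => if i = 1 then (l : ℤ) else 0, 0, fun _ => 0⟩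

/-- element with `l` in position `x_p` and all other entries `0` -/
def unitX (l p : ℕ) : BElt := ⟨fun i => if i = p then (l : ℤ) else 0, 0, fun _ => 0⟩

/-- element with `l` in position `x̄_p` and all other entries `0` -/
def unitXb (l p : ℕ) : BElt := ⟨fun _ => 0, 0, fun i => if i = p then (l : ℤ) else 0⟩

/-- the extremal elements `b^{(j)}_0 = (l,0,…,0)`,
`b^{(j)}_a = f_{i_a}^{max} b^{(j)}_{a-1} = f_{i_a}^{φ_{i_a}(b^{(j)}_{a-1})} b^{(j)}_{a-1}`
(even `j`). -/
def bseq (n l : ℕ) : ℕ → BElt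
  | 0 => bbar l
  | a + 1 => (f n (idx n (a+1)))^[(phi n (idx n (a+1)) (bseq n l a)).toNat] (bseq n l a)

end BElt


namespace BElt

lemma ext' {b c : BElt} (h1 : b.x = c.x) (h2 : b.x0 = c.x0) (h3 : b.xb = c.xb) : b = c := by
  cases b; cases c; simp_all

/-- intermediate state while applying `f_k` to `unitX l k` -/
def twoX (l k t : ℕ) : BElt :=
  ⟨fun i => if i = k then (l : ℤ) - t else if i = k + 1 then (t : ℤ) else 0, 0, fun _ => 0⟩

lemma fmid_twoX (l k t : ℕ) : fmid k (twoX l k t) = twoX l k (t + 1) := by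
  have hk : k + 1 ≠ k := Nat.succ_ne_self k
  have hc : (twoX l k t).xb (k+1) ≤ (twoX l k t).x (k+1) := by
    simp [twoX, hk]
  rw [fmid, if_pos hc]
  refine ext' ?_ rfl rfl
  funext i
  simp only [twoX, Function.update_apply]
  split_ifs <;> omega

lemma iterX (l k : ℕ) : ∀ t, (fmid k)^[t] (unitX l k) = twoX l k t
  | 0 => by
      refine ext' ?_ rfl rfl
      funext i; simp only [Function.iterate_zero, id, unitX, twoX]
      split_ifs <;> omega
  | t+1 => by
      rw [Function.iterate_succ_apply', iterX l k t, fmid_twoX]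

lemma fmid_iter_unitX (l k : ℕ) : (fmid k)^[l] (unitX l k) = unitX l (k+1) := by
  rw [iterX]
  refine ext' ?_ rfl rfl
  funext i; simp only [unitX, twoX]
  split_ifs <;> omega

/-- intermediate state while applying `f_k` to `unitXb l (k+1)` -/
def twoXb (l k t : ℕ) : BElt :=
  ⟨fun _ => 0, 0, fun i => if i = k then (t : ℤ) else if i = k + 1 then (l : ℤ) - t else 0⟩

lemma fmid_twoXb (l k t : ℕ) (ht : t < l) : fmid k (twoXb l k t) = twoXb l k (t+1) := by
  have hk : k + 1 ≠ k := Nat.succ_ne_self k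
  have hc : ¬ (twoXb l k t).xb (k+1) ≤ (twoXb l k t).x (k+1) := by
    simp only [twoXb, if_neg hk, if_pos rfl, ite_true, not_le]
    omega
  rw [fmid, if_neg hc]
  refine ext' rfl rfl ?_
  funext i
  simp only [twoXb, Function.update_apply]
  split_ifs <;> omega

lemma iterXb (l k : ℕ) : ∀ t, t ≤ l → (fmid k)^[t] (unitXb l (k+1)) = twoXb l k t
  | 0, _ => by
      refine ext' rfl rfl ?_
      funext i; simp only [Function.iterate_zero, id, unitXb, twoXb]
      split_ifs <;> omega
  | t+1, h => by
      rw [Function.iterate_succ_apply', iterXb l k t (by omega), fmid_twoXb l k t (by omega)]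

lemma fmid_iter_unitXb (l k : ℕ) : (fmid k)^[l] (unitXb l (k+1)) = unitXb l k := by
  rw [iterXb l k l le_rfl]
  refine ext' rfl rfl ?_
  funext i; simp only [unitXb, twoXb]
  split_ifs <;> omega

/-- intermediate state while applying `f_n` to `unitX l n` -/
def midN (n l s : ℕ) : BElt :=
  ⟨fun i => if i = n then (l:ℤ) - s else 0, 0, fun i => if i = n then (s:ℤ) else 0⟩

lemma flast_sq (n l s : ℕ) : flast n (flast n (midN n l s)) = midN n l (s+1) := by
  have h1 : flast n (midN n l s)
      = ⟨fun i => if i = n then (l:ℤ) - s - 1 else 0, 1,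
         fun i => if i = n then (s:ℤ) else 0⟩ := by
    rw [flast, if_pos (show (midN n l s).x0 = 0 from rfl)]
    refine ext' ?_ rfl rfl
    funext i
    simp only [midN, Function.update_apply]
    split_ifs <;> omega
  rw [h1, flast, if_neg one_ne_zero]
  refine ext' ?_ rfl ?_
  · funext i; simp only [midN]; split_ifs <;> omega
  · funext i
    simp only [midN, Function.update_apply]
    split_ifs <;> omega

lemma iterN (n l : ℕ) : ∀ s, ((flast n)^[2])^[s] (midN n l 0) = midN n l s
  | 0 => rfl
  | s+1 => by
      rw [Function.iterate_succ_apply', iterN n l s]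
      exact flast_sq n l s

lemma flast_iter (n l : ℕ) : (flast n)^[2*l] (unitX l n) = unitXb l n := by
  have h0 : unitX l n = midN n l 0 := by
    refine ext' ?_ rfl ?_ <;> (funext i; simp only [unitX, midN]) <;> split_ifs <;> omega
  have hll : midN n l l = unitXb l n := by
    refine ext' ?_ rfl ?_ <;> (funext i; simp only [unitXb, midN]) <;> split_ifs <;> omega
  rw [h0, Function.iterate_mul, iterN, hll]

lemma phi_unitX (n l k : ℕ) (h0 : k ≠ 0) (hn : k ≠ n) : phi n k (unitX l k) = l := by
  rw [phi, if_neg h0, if_neg hn]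
  simp [unitX, Nat.succ_ne_self]

lemma phi_n_unitX (n l : ℕ) (h0 : n ≠ 0) : phi n n (unitX l n) = (2*l : ℕ) := by
  rw [phi, if_neg h0, if_pos rfl]
  simp [unitX]

lemma phi_unitXb (n l k : ℕ) (h0 : k ≠ 0) (hn : k ≠ n) : phi n k (unitXb l (k+1)) = l := by
  rw [phi, if_neg h0, if_neg hn]
  simp [unitXb, Nat.succ_ne_self]

lemma eps_unitX (n l a : ℕ) (h0 : a + 1 ≠ 0) (hn : a + 1 ≠ n) :
    eps n (a+1) (unitX l (a+1)) = 0 := by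
  rw [eps, if_neg h0, if_neg hn]
  simp [unitX, Nat.succ_ne_self]

lemma eps_n_unitX (n l : ℕ) (h0 : n ≠ 0) : eps n n (unitX l n) = 0 := by
  rw [eps, if_neg h0, if_pos rfl]
  simp [unitX]

lemma eps_unitXb (n l k : ℕ) (h0 : k ≠ 0) (hn : k ≠ n) : eps n k (unitXb l (k+1)) = 0 := by
  rw [eps, if_neg h0, if_neg hn]
  simp [unitXb, Nat.succ_ne_self, (Nat.succ_ne_self k).symm]

lemma bseq_le (n l : ℕ) (hn : 3 ≤ n) : ∀ a, a ≤ n - 1 → bseq n l a = unitX l (a+1) := by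
  intro a
  induction a with
  | zero => intro _; rfl
  | succ a ih =>
      intro ha
      have h0 : a + 1 ≠ 0 := Nat.succ_ne_zero a
      have hne : a + 1 ≠ n := by omega
      rw [bseq, ih (by omega), idx, if_pos (by omega : a + 1 ≤ n),
        phi_unitX n l (a+1) h0 hne, Int.toNat_natCast]
      have hf : f n (a+1) = fmid (a+1) := by
        funext b; rw [f, if_neg h0, if_neg hne]
      rw [hf, fmid_iter_unitX]

lemma bseq_n (n l : ℕ) (hn : 3 ≤ n) : bseq n l n = unitXb l n := by
  obtain ⟨m, rfl⟩ : ∃ m, n = m + 1 := ⟨n - 1, by omega⟩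
  have h0 : m + 1 ≠ 0 := Nat.succ_ne_zero m
  rw [bseq, bseq_le (m+1) l hn m (by omega), idx, if_pos le_rfl,
    phi_n_unitX (m+1) l h0, Int.toNat_natCast]
  have hf : f (m+1) (m+1) = flast (m+1) := by
    funext b; rw [f, if_neg h0, if_pos rfl]
  rw [hf, flast_iter]

lemma bseq_ge (n l : ℕ) (hn : 3 ≤ n) : ∀ t, t ≤ n - 1 → bseq n l (n + t) = unitXb l (n - t) := by
  intro t
  induction t with
  | zero => intro _; exact bseq_n n l hn
  | succ t ih =>
      intro ht
      obtain ⟨k, hknt⟩ : ∃ k, n - t = k + 1 := ⟨n - t - 1, by omega⟩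
      have h0 : k ≠ 0 := by omega
      have hne : k ≠ n := by omega
      have hidx : idx n (n + t + 1) = k := by
        rw [idx, if_neg (by omega)]; omega
      show bseq n l ((n + t) + 1) = unitXb l (n - (t+1))
      rw [bseq, ih (by omega), hidx, hknt,
        phi_unitXb n l k h0 hne, Int.toNat_natCast]
      have hf : f n k = fmid k := by
        funext b; rw [f, if_neg h0, if_neg hne]
      rw [hf, fmid_iter_unitXb]
      congr 1
      omega

end BElt

/-- in the `B_n^{(1)}` perfect crystal of level `l` (even `j`), the
extremal elements satisfy `b_a = (0,…,0,l,0,…,0)` with `l` in position `x_{a+1}`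
for `1 ≤ a ≤ n-1`, `b_{n+a-1}` has `l` in position `x̄_{n-a+1}` for `1 ≤ a ≤ n-1`,
`b_{2n-1}` has `l` in position `x̄_1`; moreover `ε_{i_{a+1}}(b_a) = 0` and
`φ_{i_{a+1}}(b_a) > 0` for all `1 ≤ a ≤ 2n-2`. -/
theorem Bn1_extremal_elements (n l : ℕ) (hn : 3 ≤ n) (hl : 1 ≤ l) :
    (∀ a, 1 ≤ a → a ≤ n - 1 → BElt.bseq n l a = BElt.unitX l (a+1)) ∧
    (∀ a, 1 ≤ a → a ≤ n - 1 → BElt.bseq n l (n+a-1) = BElt.unitXb l (n-a+1)) ∧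
    BElt.bseq n l (2*n-1) = BElt.unitXb l 1 ∧
    (∀ a, 1 ≤ a → a ≤ 2*n-2 →
      BElt.eps n (BElt.idx n (a+1)) (BElt.bseq n l a) = 0 ∧
      0 < BElt.phi n (BElt.idx n (a+1)) (BElt.bseq n l a)) := by
  have hP1 : ∀ a, a ≤ n - 1 → BElt.bseq n l a = BElt.unitX l (a+1) := BElt.bseq_le n l hn
  have hP2 : ∀ t, t ≤ n - 1 → BElt.bseq n l (n + t) = BElt.unitXb l (n - t) := BElt.bseq_ge n l hn
  refine ⟨fun a h1 h2 => hP1 a h2, ?_, ?_, ?_⟩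
  · intro a h1 h2
    have e1 : n + a - 1 = n + (a - 1) := by omega
    have e2 : n - a + 1 = n - (a - 1) := by omega
    rw [e1, e2, hP2 (a-1) (by omega)]
  · have e1 : 2 * n - 1 = n + (n - 1) := by omega
    have e2 : n - (n - 1) = 1 := by omega
    rw [e1, hP2 (n-1) le_rfl, e2]
  · intro a h1 h2
    by_cases hA : a ≤ n - 2
    · have hb : BElt.bseq n l a = BElt.unitX l (a+1) := hP1 a (by omega)
      have h0 : a + 1 ≠ 0 := Nat.succ_ne_zero a
      have hne : a + 1 ≠ n := by omega
      have hidx : BElt.idx n (a+1) = a + 1 := by rw [BElt.idx, if_pos (by omega)]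
      refine ⟨?_, ?_⟩
      · rw [hb, hidx, BElt.eps_unitX n l a h0 hne]
      · rw [hb, hidx, BElt.phi_unitX n l (a+1) h0 hne]
        omega
    · by_cases hB : a = n - 1
      · subst hB
        have e1 : n - 1 + 1 = n := by omega
        have h0 : n ≠ 0 := by omega
        have hidx : BElt.idx n (n - 1 + 1) = n := by rw [e1, BElt.idx, if_pos le_rfl]
        have hb : BElt.bseq n l (n-1) = BElt.unitX l n := by
          rw [hP1 (n-1) le_rfl, e1]
        refine ⟨?_, ?_⟩
        · rw [hb, hidx, BElt.eps_n_unitX n l h0]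
        · rw [hb, hidx, BElt.phi_n_unitX n l h0]
          omega
      · have hge : n ≤ a := by omega
        set k := 2 * n - a - 1 with hk
        have h0 : k ≠ 0 := by omega
        have hne : k ≠ n := by omega
        have hidx : BElt.idx n (a+1) = k := by
          rw [BElt.idx, if_neg (by omega)]; omega
        have hb : BElt.bseq n l a = BElt.unitXb l (k+1) := by
          have e1 : a = n + (a - n) := by omega
          have e2 : n - (a - n) = k + 1 := by omega
          rw [e1, hP2 (a-n) (by omega), e2]
        refine ⟨?_, ?_⟩
        · rw [hb, hidx, BElt.eps_unitXb n l k h0 hne]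
        · rw [hb, hidx, BElt.phi_unitXb n l k h0 hne]
          omega
end

section
/- For the A_{2n}^{(2)} perfect crystal of level l, the operator f_0 satisfies: f_0 b is defined if and only if φ_0(b) = l - Σ_{i=1}^n(x_i+\bar{x}_i) + 2·max(\bar{x}_1-x_1, 0) > 0, and in that case f_0 b ∈ B, i.e., the result still satisfies Σ_{i=1}^n(x_i+\bar{x}_i) ≤ l and all coordinates nonnegative. -/
/- The perfect crystal B of level l for A_{2n}^{(2)}:
   elements (x_1,…,x_n,x̄_n,…,x̄_1) with x_i, x̄_i ≥ 0 and Σ (x_i + x̄_i) ≤ l.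
   We encode an element as a pair of ℕ-indexed integer functions
   supported on 1..n. -/
structure AElt where
  x : ℕ → ℤ
  xb : ℕ → ℤ

namespace AElt

def sumA (n : ℕ) (b : AElt) : ℤ := ∑ i ∈ Finset.Icc 1 n, (b.x i + b.xb i)

/-- membership in the level `l` perfect crystal `B` for `A_{2n}^{(2)}` -/
def mem (n l : ℕ) (b : AElt) : Prop :=
  (∀ i, 0 ≤ b.x i) ∧ (∀ i, 0 ≤ b.xb i) ∧
  (∀ i, i = 0 ∨ n < i → b.x i = 0 ∧ b.xb i = 0) ∧
  sumA n b ≤ l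

/-- the Kashiwara operator `f_0` -/
def f0 (b : AElt) : AElt :=
  if b.xb 1 ≤ b.x 1 then ⟨Function.update b.x 1 (b.x 1 + 1), b.xb⟩
  else ⟨b.x, Function.update b.xb 1 (b.xb 1 - 1)⟩

/-- the Kashiwara operator `f_i`, `1 ≤ i ≤ n-1` -/
def fmid (i : ℕ) (b : AElt) : AElt :=
  if b.xb (i+1) ≤ b.x (i+1) then
    ⟨Function.update (Function.update b.x i (b.x i - 1)) (i+1) (b.x (i+1) + 1), b.xb⟩
  else
    ⟨b.x, Function.update (Function.update b.xb (i+1) (b.xb (i+1) - 1)) i (b.xb i + 1)⟩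

/-- the Kashiwara operator `f_n` -/
def flast (n : ℕ) (b : AElt) : AElt :=
  ⟨Function.update b.x n (b.x n - 1), Function.update b.xb n (b.xb n + 1)⟩

/-- the Kashiwara operator `f_i`, `0 ≤ i ≤ n` -/
def f (n i : ℕ) (b : AElt) : AElt :=
  if i = 0 then f0 b else if i = n then flast n b else fmid i b

/-- `φ_i(b)`; `f_i b` is defined exactly when `φ_i(b) > 0` -/
def phi (n l i : ℕ) (b : AElt) : ℤ :=
  if i = 0 then (l : ℤ) - sumA n b + 2 * max (b.xb 1 - b.x 1) 0
  else if i = n then b.x n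
  else b.x i + max (b.xb (i+1) - b.x (i+1)) 0

/-- `ε_i(b)` for the `A_{2n}^{(2)}` perfect crystal -/
def eps (n l i : ℕ) (b : AElt) : ℤ :=
  if i = 0 then (l : ℤ) - sumA n b + 2 * max (b.x 1 - b.xb 1) 0
  else if i = n then b.xb n
  else b.xb i + max (b.x (i+1) - b.xb (i+1)) 0

end AElt

/-- for the `A_{2n}^{(2)}` perfect crystal of level `l`, `f_0 b` is
defined iff `φ_0(b) = l - Σ(x_i + x̄_i) + 2·max(x̄_1 - x_1, 0) > 0`, and in that
case `f_0 b ∈ B`: the result still has all coordinates nonnegative and total sum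
at most `l`. -/
theorem A2n2_f0_preserves_constraints (n l : ℕ) (hn : 2 ≤ n) (hl : 1 ≤ l)
    (b : AElt) (hb : AElt.mem n l b) (hphi : 0 < AElt.phi n l 0 b) :
    AElt.mem n l (AElt.f0 b) := by
  obtain ⟨hx, hxb, hz, hs⟩ := hb
  have h1mem : (1 : ℕ) ∈ Finset.Icc 1 n := by
    simp [Finset.mem_Icc]; omega
  have key : ∀ (f : ℕ → ℤ) (v : ℤ),
      ∑ i ∈ Finset.Icc 1 n, Function.update f 1 v i
        = v - f 1 + ∑ i ∈ Finset.Icc 1 n, f i := by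
    intro f v
    rw [Finset.sum_update_of_mem h1mem, ← Finset.add_sum_erase _ f h1mem,
      Finset.erase_eq]
    ring
  simp only [AElt.phi, if_true, eq_self_iff_true, AElt.sumA] at hphi
  unfold AElt.f0
  split_ifs with hc
  · have hmax : max (b.xb 1 - b.x 1) 0 = 0 := by
      simp [max_eq_right]; omega
    rw [hmax] at hphi
    refine ⟨?_, hxb, ?_, ?_⟩
    · intro i
      rcases eq_or_ne i 1 with rfl | h
      · simp; have := hx 1; omega
      · simp [Function.update_of_ne h]; exact hx i
    · intro i hi
      have hz' := hz i hi
      have hi1 : i ≠ 1 := by omega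
      simp [Function.update_of_ne hi1]; exact hz'
    · simp only [hmax, if_true, AElt.sumA, Finset.sum_add_distrib] at hphi ⊢
      rw [key]
      omega
  · push_neg at hc
    refine ⟨hx, ?_, ?_, ?_⟩
    · intro i
      rcases eq_or_ne i 1 with rfl | h
      · simp; have := hx 1; omega
      · simp [Function.update_of_ne h]; exact hxb i
    · intro i hi
      have hz' := hz i hi
      have hi1 : i ≠ 1 := by omega
      simp [Function.update_of_ne hi1]; exact hz'
    · simp only [AElt.sumA, Finset.sum_add_distrib] at hs ⊢
      rw [key]
      omega
end

section
/- For the A_{2n-1}^{(2)} perfect crystal of level l, B is perfect of level l in the minimality sense: for every b ∈ B, Σ_i (level of Λ_i)·ε_i(b) ≥ l, with the level of Λ_0, Λ_1 equal to 1 and of Λ_i equal to 2 for 2 ≤ i ≤ n; and for every dominant weight λ = Σ m_iΛ_i of level l there is a unique b ∈ B with ε_i(b) = m_i for all i. -/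
/- The perfect crystal B of level l for A_{2n-1}^{(2)}:
   elements (x_1,…,x_n,x̄_n,…,x̄_1) with x_i, x̄_i ≥ 0 and Σ(x_i + x̄_i) = l. -/
structure A2oElt where
  x : ℕ → ℤ
  xb : ℕ → ℤ

namespace A2oElt

def sumA (n : ℕ) (b : A2oElt) : ℤ := ∑ i ∈ Finset.Icc 1 n, (b.x i + b.xb i)

/-- membership in the level `l` perfect crystal `B` for `A_{2n-1}^{(2)}` -/
def mem (n l : ℕ) (b : A2oElt) : Prop :=
  (∀ i, 0 ≤ b.x i) ∧ (∀ i, 0 ≤ b.xb i) ∧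
  (∀ i, i = 0 ∨ n < i → b.x i = 0 ∧ b.xb i = 0) ∧
  sumA n b = l

/-- `φ_i(b)` for the `A_{2n-1}^{(2)}` perfect crystal -/
def phi (n i : ℕ) (b : A2oElt) : ℤ :=
  if i = 0 then b.xb 1 + max (b.xb 2 - b.x 2) 0
  else if i = n then b.x n
  else b.x i + max (b.xb (i+1) - b.x (i+1)) 0

/-- `ε_i(b)` for the `A_{2n-1}^{(2)}` perfect crystal -/
def eps (n i : ℕ) (b : A2oElt) : ℤ :=
  if i = 0 then b.x 1 + max (b.x 2 - b.xb 2) 0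
  else if i = n then b.xb n
  else b.xb i + max (b.x (i+1) - b.xb (i+1)) 0

end A2oElt

lemma A2o_key (n l : ℕ) (hn : 3 ≤ n) (b : A2oElt) (hb : A2oElt.mem n l b) :
    A2oElt.eps n 0 b + A2oElt.eps n 1 b + 2 * ∑ i ∈ Finset.Icc 2 n, A2oElt.eps n i b
      = (l : ℤ) + ∑ i ∈ Finset.Icc 2 n, |b.x i - b.xb i| := by
  obtain ⟨hx, hxb, hz, hsum⟩ := hb
  have hzn1 := hz (n+1) (Or.inr (by omega))
  set M : ℕ → ℤ := fun i => max (b.x i - b.xb i) 0 with hM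
  have heps : ∀ i ∈ Finset.Icc 2 n, A2oElt.eps n i b = b.xb i + M (i+1) := by
    intro i hi
    simp only [Finset.mem_Icc] at hi
    by_cases h : i = n
    · rw [A2oElt.eps, if_neg (by omega), if_pos h, h]
      have : M (n+1) = max (b.x (n+1) - b.xb (n+1)) 0 := rfl
      rw [this, hzn1.1, hzn1.2]
      simp
    · rw [A2oElt.eps, if_neg (by omega), if_neg h]
  rw [Finset.sum_congr rfl heps, Finset.sum_add_distrib]
  have hre : ∑ i ∈ Finset.Icc 2 n, M (i+1) = ∑ i ∈ Finset.Icc 3 (n+1), M i := by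
    rw [← Finset.map_add_right_Icc 2 n 1, Finset.sum_map]
    simp
  have htop : ∑ i ∈ Finset.Icc 3 (n+1), M i = (∑ i ∈ Finset.Icc 3 n, M i) + M (n+1) :=
    Finset.sum_Icc_succ_top (by omega) M
  have hMn1 : M (n+1) = 0 := by simp [hM, hzn1.1, hzn1.2]
  have hins2 : Finset.Icc 2 n = insert 2 (Finset.Icc 3 n) := by
    ext i; simp [Finset.mem_Icc]; omega
  have hSM : ∑ i ∈ Finset.Icc 2 n, M i = M 2 + ∑ i ∈ Finset.Icc 3 n, M i := by
    rw [hins2, Finset.sum_insert (by simp)]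
  have hins1 : Finset.Icc 1 n = insert 1 (Finset.Icc 2 n) := by
    ext i; simp [Finset.mem_Icc]; omega
  have hl' : (l : ℤ) = (b.x 1 + b.xb 1) + ∑ i ∈ Finset.Icc 2 n, (b.x i + b.xb i) := by
    rw [← hsum, A2oElt.sumA, hins1, Finset.sum_insert (by simp)]
  have habs : ∑ i ∈ Finset.Icc 2 n, |b.x i - b.xb i|
      = ∑ i ∈ Finset.Icc 2 n, (2 * M i - (b.x i - b.xb i)) := by
    refine Finset.sum_congr rfl fun i _ => ?_
    have hMi : M i = max (b.x i - b.xb i) 0 := rfl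
    rcases abs_cases (b.x i - b.xb i) with ⟨h1, h2⟩ | ⟨h1, h2⟩
    · rw [h1, hMi, max_eq_left h2]; ring
    · rw [h1, hMi, max_eq_right h2.le]; ring
  rw [A2oElt.eps, if_pos rfl, A2oElt.eps, if_neg (by omega), if_neg (by omega),
    hre, htop, hMn1, hl', habs, Finset.sum_sub_distrib, Finset.sum_sub_distrib,
    Finset.sum_add_distrib]
  have h2 : (∑ i ∈ Finset.Icc 2 n, 2 * M i) = 2 * ∑ i ∈ Finset.Icc 2 n, M i :=
    (Finset.mul_sum _ _ _).symm
  rw [h2, hSM]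
  have : M 2 = max (b.x 2 - b.xb 2) 0 := rfl
  rw [← this]
  ring

/-- the unique element of `B` with prescribed `ε` values -/
def A2omk (n : ℕ) (m : ℕ → ℕ) : A2oElt :=
  ⟨fun i => if i = 1 then (m 0 : ℤ) else if 2 ≤ i ∧ i ≤ n then (m i : ℤ) else 0,
   fun i => if 1 ≤ i ∧ i ≤ n then (m i : ℤ) else 0⟩


/-- the `A_{2n-1}^{(2)}` crystal `B` is perfect of level `l`:
for every `b ∈ B`, `Σ_i (level Λ_i)·ε_i(b) ≥ l` (with levels `1,1,2,…,2` at
vertices `0,1,2,…,n`), and for every dominant weight `λ = Σ m_iΛ_i` of level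
`l` (i.e. `m_0 + m_1 + 2Σ_{i=2}^n m_i = l`) there is a unique `b ∈ B` with
`ε_i(b) = m_i` for all `i`. -/
theorem A2nm12_perfect (n l : ℕ) (hn : 3 ≤ n) (hl : 1 ≤ l) :
    (∀ b : A2oElt, A2oElt.mem n l b →
      (l : ℤ) ≤ A2oElt.eps n 0 b + A2oElt.eps n 1 b
        + 2 * ∑ i ∈ Finset.Icc 2 n, A2oElt.eps n i b) ∧
    (∀ m : ℕ → ℕ, m 0 + m 1 + 2 * ∑ i ∈ Finset.Icc 2 n, m i = l →
      ∃! b : A2oElt, A2oElt.mem n l b ∧ ∀ i ≤ n, A2oElt.eps n i b = m i) := by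
  constructor
  · intro b hb
    rw [A2o_key n l hn b hb]
    have h0 : 0 ≤ ∑ i ∈ Finset.Icc 2 n, |b.x i - b.xb i| :=
      Finset.sum_nonneg fun i _ => abs_nonneg _
    linarith
  · intro m hm
    have hins1 : Finset.Icc 1 n = insert 1 (Finset.Icc 2 n) := by
      ext i; simp [Finset.mem_Icc]; omega
    have hx1v : (A2omk n m).x 1 = (m 0 : ℤ) := by
      simp [A2omk]
    have hxmid : ∀ i, 2 ≤ i → i ≤ n → (A2omk n m).x i = (m i : ℤ) := by
      intro i h2 h3; dsimp [A2omk]; split_ifs <;> first | rfl | omega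
    have hxbmid : ∀ i, 1 ≤ i → i ≤ n → (A2omk n m).xb i = (m i : ℤ) := by
      intro i h2 h3; dsimp [A2omk]; split_ifs <;> first | rfl | omega
    refine ⟨A2omk n m, ⟨⟨?_, ?_, ?_, ?_⟩, ?_⟩, ?_⟩
    · intro i; dsimp [A2omk]; split_ifs <;> positivity
    · intro i; dsimp [A2omk]; split_ifs <;> positivity
    · intro i hi
      constructor <;> dsimp [A2omk] <;> split_ifs <;> first | rfl | omega
    · rw [A2oElt.sumA, hins1, Finset.sum_insert (by simp)]
      rw [hx1v, hxbmid 1 le_rfl (by omega)]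
      have h3 : ∀ i ∈ Finset.Icc 2 n, (A2omk n m).x i + (A2omk n m).xb i = 2 * (m i : ℤ) := by
        intro i hi
        simp only [Finset.mem_Icc] at hi
        rw [hxmid i hi.1 hi.2, hxbmid i (by omega) hi.2]; ring
      rw [Finset.sum_congr rfl h3, ← Finset.mul_sum]
      push_cast [← hm]
      ring
    · intro i hi
      by_cases h0 : i = 0
      · rw [h0, A2oElt.eps, if_pos rfl, hx1v, hxmid 2 le_rfl (by omega),
          hxbmid 2 (by omega) (by omega)]
        simp
      · by_cases hn' : i = n
        · rw [hn', A2oElt.eps, if_neg (by omega), if_pos rfl, hxbmid n (by omega) le_rfl]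
        · rw [A2oElt.eps, if_neg h0, if_neg hn', hxbmid i (by omega) hi,
            hxmid (i+1) (by omega) (by omega), hxbmid (i+1) (by omega) (by omega)]
          simp
    · rintro b ⟨hbmem, hbeps⟩
      have hz := hbmem.2.2.1
      have hS := A2o_key n l hn b hbmem
      have hseps : ∑ i ∈ Finset.Icc 2 n, A2oElt.eps n i b = ∑ i ∈ Finset.Icc 2 n, (m i : ℤ) := by
        refine Finset.sum_congr rfl fun i hi => ?_
        simp only [Finset.mem_Icc] at hi
        exact hbeps i hi.2
      rw [hbeps 0 (by omega), hbeps 1 (by omega), hseps] at hS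
      have hmz : (m 0 : ℤ) + m 1 + 2 * ∑ i ∈ Finset.Icc 2 n, (m i : ℤ) = (l : ℤ) := by
        push_cast [← hm]; ring
      have hzero : ∑ i ∈ Finset.Icc 2 n, |b.x i - b.xb i| = 0 := by linarith
      have hdiag : ∀ i, 2 ≤ i → i ≤ n → b.x i = b.xb i := by
        intro i h2 h3
        have h4 := (Finset.sum_eq_zero_iff_of_nonneg (fun i _ => abs_nonneg _)).mp hzero i
          (Finset.mem_Icc.mpr ⟨h2, h3⟩)
        have := abs_eq_zero.mp h4
        omega
      have hxbv : ∀ i, 1 ≤ i → i ≤ n → b.xb i = (m i : ℤ) := by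
        intro i h1 h2
        have hh := hbeps i h2
        by_cases h : i = n
        · rw [h] at hh ⊢
          rwa [A2oElt.eps, if_neg (by omega), if_pos rfl] at hh
        · rw [A2oElt.eps, if_neg (by omega), if_neg h,
            hdiag (i+1) (by omega) (by omega)] at hh
          simpa using hh
      have hx1 : b.x 1 = (m 0 : ℤ) := by
        have hh := hbeps 0 (by omega)
        rw [A2oElt.eps, if_pos rfl, hdiag 2 le_rfl (by omega)] at hh
        simpa using hh
      have hfx : b.x = (A2omk n m).x := by
        funext i
        by_cases h1 : i = 1
        · rw [h1, hx1v]; exact h1 ▸ hx1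
        · by_cases h2 : 2 ≤ i ∧ i ≤ n
          · rw [hxmid i h2.1 h2.2, hdiag i h2.1 h2.2]
            exact hxbv i (by omega) h2.2
          · have : (A2omk n m).x i = 0 := by
              dsimp [A2omk]; split_ifs <;> first | rfl | omega
            rw [this]
            exact (hz i (by omega)).1
      have hfxb : b.xb = (A2omk n m).xb := by
        funext i
        by_cases h2 : 1 ≤ i ∧ i ≤ n
        · rw [hxbmid i h2.1 h2.2]; exact hxbv i h2.1 h2.2
        · have : (A2omk n m).xb i = 0 := by
            dsimp [A2omk]; split_ifs <;> first | rfl | omega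
          rw [this]
          exact (hz i (by omega)).2
      have heta : b = ⟨b.x, b.xb⟩ := rfl
      rw [heta, hfx, hfxb]
end
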